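/- Let G be a thick spider with body K = {k1,...,kn} and feet S = {s1,...,sn} (n ≥ 2), where ki is adjacent to sj iff i ≠ j, and with empty head. Then the set of edges {ki, sj} with i < j, of size C(n,2), is a minimum-size edge set whose deletion makes G P4-free. -/

import Mathlib

open SimpleGraph

/-- The four (distinct) vertices `a, b, c, d` induce a path `a - b - c - d` in `G`. -/
def IsInducedP4 {V : Type*} (G : SimpleGraph V) (a b c d : V) : Prop :=
  a ≠ b ∧ a ≠ c ∧ a ≠ d ∧ b ≠ c ∧ b ≠ d ∧ c ≠ d ∧
  G.Adj a b ∧ G.Adj b c ∧ G.Adj c d ∧ ¬ G.Adj a c ∧ ¬ G.Adj a d ∧ ¬ G.Adj b d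

/-- A graph is `P₄`-free if no four vertices induce a path on four vertices. -/
def P4Free {V : Type*} (G : SimpleGraph V) : Prop := ∀ a b c d : V, ¬ IsInducedP4 G a b c d

/-- The thick spider with empty head: body `K = {inl i}` is a clique, feet `S = {inr i}` form a
stable set, and `inl i` is adjacent to `inr j` iff `i ≠ j`. -/
def thickSpider (n : ℕ) : SimpleGraph (Fin n ⊕ Fin n) :=
  SimpleGraph.fromRel (fun a b =>
    match a, b with
    | Sum.inl i, Sum.inl j => i ≠ j
    | Sum.inl i, Sum.inr j => i ≠ j
    | Sum.inr _, _ => False)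

/-!
For `i ≠ j` the vertices `sᵢ, kⱼ, kᵢ, sⱼ` induce a `P₄` in the spider, and the three edges of
that path all join vertices with indices `{i, j}`; so a deletion set that destroys every such
path meets each of the `C(n,2)` index pairs and has at least `C(n,2)` edges. Conversely, after
deleting the edges `kᵢsⱼ` with `i < j` the graph is a split graph in which the feet have nested
neighbourhoods (`N(sⱼ) = {kᵢ | j < i}`), and such a graph has no induced `P₄`: in a split graph
both inner vertices of a `P₄` lie in the clique and both ends in the stable set, and the ends
then have incomparable neighbourhoods.
-/

open Finset

section InducedP4

variable {V : Type*} {G : SimpleGraph V} {a b c d : V}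

lemma IsInducedP4.reverse (h : IsInducedP4 G a b c d) : IsInducedP4 G d c b a := by
  obtain ⟨hab, hac, had, hbc, hbd, hcd, Hab, Hbc, Hcd, Nac, Nad, Nbd⟩ := h
  exact ⟨hcd.symm, hbd.symm, had.symm, hbc.symm, hac.symm, hab.symm, Hcd.symm, Hbc.symm,
    Hab.symm, fun h => Nbd h.symm, fun h => Nad h.symm, fun h => Nac h.symm⟩

lemma IsInducedP4.deleteEdges {E : Set (Sym2 V)} (h : IsInducedP4 G a b c d)
    (hab : s(a, b) ∉ E) (hbc : s(b, c) ∉ E) (hcd : s(c, d) ∉ E) :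
    IsInducedP4 (G.deleteEdges E) a b c d := by
  obtain ⟨h₁, h₂, h₃, h₄, h₅, h₆, Hab, Hbc, Hcd, Nac, Nad, Nbd⟩ := h
  exact ⟨h₁, h₂, h₃, h₄, h₅, h₆, deleteEdges_adj.2 ⟨Hab, hab⟩,
    deleteEdges_adj.2 ⟨Hbc, hbc⟩, deleteEdges_adj.2 ⟨Hcd, hcd⟩,
    fun h => Nac h.1, fun h => Nad h.1, fun h => Nbd h.1⟩

lemma P4Free.deleteEdges_mem_of_isInducedP4 {E : Set (Sym2 V)} (hE : P4Free (G.deleteEdges E))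
    (h : IsInducedP4 G a b c d) : s(a, b) ∈ E ∨ s(b, c) ∈ E ∨ s(c, d) ∈ E := by
  by_contra! hnot
  exact hE a b c d (h.deleteEdges hnot.1 hnot.2.1 hnot.2.2)

lemma IsInducedP4.snd_mem_of_isClique {K : Set V} (hK : G.IsClique K) (hS : G.IsIndepSet Kᶜ)
    (h : IsInducedP4 G a b c d) : b ∈ K := by
  obtain ⟨-, hac, -, hbc, -, -, Hab, Hbc, -, Nac, -, -⟩ := h
  by_contra hb
  have ha : a ∈ K := by_contra fun ha => hS ha hb Hab.ne Hab
  have hc : c ∈ K := by_contra fun hc => hS hb hc hbc Hbc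
  exact Nac (hK ha hc hac)

theorem p4Free_of_isClique_of_isIndepSet_compl {K : Set V} (hK : G.IsClique K)
    (hS : G.IsIndepSet Kᶜ)
    (hnested : ∀ x ∉ K, ∀ y ∉ K, G.neighborSet x ⊆ G.neighborSet y ∨
      G.neighborSet y ⊆ G.neighborSet x) :
    P4Free G := by
  intro a b c d h
  have hb : b ∈ K := h.snd_mem_of_isClique hK hS
  have hc : c ∈ K := h.reverse.snd_mem_of_isClique hK hS
  obtain ⟨-, hac, -, hbc, hbd, -, Hab, -, Hcd, Nac, -, Nbd⟩ := h
  have ha : a ∉ K := fun ha => Nac (hK ha hc hac)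
  have hd : d ∉ K := fun hd => Nbd (hK hb hd hbd)
  rcases hnested a ha d hd with had | hda
  · exact Nbd (had (show b ∈ G.neighborSet a from Hab)).symm
  · exact Nac (hda (show c ∈ G.neighborSet d from Hcd.symm))

end InducedP4

section ThickSpider

variable {n : ℕ} {i j : Fin n}

@[simp] lemma thickSpider_adj_inl_inl : (thickSpider n).Adj (.inl i) (.inl j) ↔ i ≠ j := by
  simp [thickSpider]; tauto

@[simp] lemma thickSpider_adj_inl_inr : (thickSpider n).Adj (.inl i) (.inr j) ↔ i ≠ j := by
  simp [thickSpider]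

@[simp] lemma thickSpider_adj_inr_inl : (thickSpider n).Adj (.inr i) (.inl j) ↔ j ≠ i := by
  simp [thickSpider]

@[simp] lemma thickSpider_not_adj_inr_inr : ¬ (thickSpider n).Adj (.inr i) (.inr j) := by
  simp [thickSpider]

lemma thickSpider_isInducedP4 (hij : i ≠ j) :
    IsInducedP4 (thickSpider n) (.inr i) (.inl j) (.inl i) (.inr j) := by
  simp [IsInducedP4, hij, hij.symm]

lemma card_le_of_p4Free_deleteEdges {E : Finset (Sym2 (Fin n ⊕ Fin n))}
    (hE : P4Free ((thickSpider n).deleteEdges ↑E)) : n.choose 2 ≤ #E := by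
  let indices : Sym2 (Fin n ⊕ Fin n) → Sym2 (Fin n) := Sym2.map (Sum.elim id id)
  have hsurj : Set.SurjOn indices E {z | ¬ z.IsDiag} := by
    rintro z hz
    induction z using Sym2.ind with
    | _ i j =>
      obtain h | h | h :=
        hE.deleteEdges_mem_of_isInducedP4 (thickSpider_isInducedP4 (Sym2.mk_isDiag_iff.not.1 hz))
      all_goals exact ⟨_, h, by simp [indices, Sym2.eq_swap]⟩
  calc n.choose 2 = #(univ.filter fun z : Sym2 (Fin n) => ¬ z.IsDiag) := by
        rw [← Fintype.card_subtype, Sym2.card_subtype_not_diag, Fintype.card_fin]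
    _ ≤ #E := card_le_card_of_surjOn indices (by simpa using hsurj)

def thickSpiderCut (n : ℕ) : Finset (Sym2 (Fin n ⊕ Fin n)) :=
  (univ.filter fun p : Fin n × Fin n => p.1 < p.2).image fun p => s(Sum.inl p.1, Sum.inr p.2)

lemma card_filter_fst_lt_snd (n : ℕ) :
    #(univ.filter fun p : Fin n × Fin n => p.1 < p.2) = n.choose 2 := by
  rw [Nat.choose_two_right, ← sum_range_id, card_filter, ← univ_product_univ,
    sum_product_right, ← Fin.sum_univ_eq_sum_range]
  refine sum_congr rfl fun j _ => ?_
  rw [← card_filter, ← Fin.card_Iio j]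
  congr 1
  ext i
  simp

lemma card_thickSpiderCut (n : ℕ) : #(thickSpiderCut n) = n.choose 2 := by
  rw [thickSpiderCut, card_image_of_injective, card_filter_fst_lt_snd]
  rintro ⟨i, j⟩ ⟨i', j'⟩ h
  simpa using h

lemma mk_inl_inl_notMem_thickSpiderCut : s(Sum.inl i, Sum.inl j) ∉ thickSpiderCut n := by
  simp [thickSpiderCut]

lemma mk_inl_inr_mem_thickSpiderCut : s(Sum.inl i, Sum.inr j) ∈ thickSpiderCut n ↔ i < j := by
  simp [thickSpiderCut]

lemma thickSpider_deleteEdges_thickSpiderCut_adj_inr_inl :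
    ((thickSpider n).deleteEdges ↑(thickSpiderCut n)).Adj (.inr j) (.inl i) ↔ j < i := by
  rw [deleteEdges_adj, Sym2.eq_swap, mem_coe, mk_inl_inr_mem_thickSpiderCut,
    thickSpider_adj_inr_inl, not_lt]
  exact ⟨fun ⟨hne, hle⟩ => lt_of_le_of_ne hle hne.symm, fun h => ⟨h.ne', h.le⟩⟩

lemma neighborSet_inr_thickSpider_deleteEdges_thickSpiderCut :
    ((thickSpider n).deleteEdges ↑(thickSpiderCut n)).neighborSet (.inr j) =
      Sum.inl '' Set.Ioi j := by
  ext (i | i)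
  · rw [mem_neighborSet, Sum.inl_injective.mem_set_image, Set.mem_Ioi]
    exact thickSpider_deleteEdges_thickSpiderCut_adj_inr_inl
  · simp only [mem_neighborSet, Set.mem_image, reduceCtorEq, and_false, exists_false, iff_false]
    exact fun h => thickSpider_not_adj_inr_inr (deleteEdges_le _ h)

lemma p4Free_thickSpider_deleteEdges_thickSpiderCut :
    P4Free ((thickSpider n).deleteEdges ↑(thickSpiderCut n)) := by
  refine p4Free_of_isClique_of_isIndepSet_compl (K := Set.range Sum.inl) ?_ ?_ ?_
  · rintro _ ⟨i, rfl⟩ _ ⟨j, rfl⟩ hij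
    exact deleteEdges_adj.2 ⟨thickSpider_adj_inl_inl.2 (by simpa using hij),
      mk_inl_inl_notMem_thickSpiderCut⟩
  · rw [Set.compl_range_inl]
    rintro _ ⟨i, rfl⟩ _ ⟨j, rfl⟩ - h
    exact thickSpider_not_adj_inr_inr (deleteEdges_le _ h)
  · rintro (x | x) hx (y | y) hy
    · exact absurd ⟨x, rfl⟩ hx
    · exact absurd ⟨x, rfl⟩ hx
    · exact absurd ⟨y, rfl⟩ hy
    simp only [neighborSet_inr_thickSpider_deleteEdges_thickSpiderCut]
    rcases le_total x y with hxy | hyx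
    · exact Or.inr (Set.image_mono (Set.Ioi_subset_Ioi hxy))
    · exact Or.inl (Set.image_mono (Set.Ioi_subset_Ioi hyx))

end ThickSpider

theorem thickSpider_min_cograph_edge_deletion_general (n : ℕ)
    (T : Finset (Sym2 (Fin n ⊕ Fin n)))
    (hT : T = (Finset.univ.filter (fun p : Fin n × Fin n => p.1 < p.2)).image
      (fun p : Fin n × Fin n => s(Sum.inl p.1, Sum.inr p.2))) :
    T.card = n.choose 2 ∧ P4Free ((thickSpider n).deleteEdges ↑T) ∧
      ∀ E' : Finset (Sym2 (Fin n ⊕ Fin n)),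
        P4Free ((thickSpider n).deleteEdges ↑E') → n.choose 2 ≤ E'.card := by
  subst hT
  exact ⟨card_thickSpiderCut n, p4Free_thickSpider_deleteEdges_thickSpiderCut,
    fun _ => card_le_of_p4Free_deleteEdges⟩

/-- In the thick spider with empty head, body `{k₁, …, kₙ}` and feet
`{s₁, …, sₙ}` (`n ≥ 2`), the set of edges `{kᵢ, sⱼ}` with `i < j`, of size `C(n,2)`,
is a minimum-size edge set whose deletion makes the graph `P₄`-free. -/
theorem thickSpider_min_cograph_edge_deletion (n : ℕ) (hn : 2 ≤ n)
    (T : Finset (Sym2 (Fin n ⊕ Fin n)))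
    (hT : T = (Finset.univ.filter (fun p : Fin n × Fin n => p.1 < p.2)).image
      (fun p : Fin n × Fin n => s(Sum.inl p.1, Sum.inr p.2))) :
    T.card = n.choose 2 ∧ P4Free ((thickSpider n).deleteEdges ↑T) ∧
      ∀ E' : Finset (Sym2 (Fin n ⊕ Fin n)),
        P4Free ((thickSpider n).deleteEdges ↑E') → n.choose 2 ≤ E'.card :=
  thickSpider_min_cograph_edge_deletion_general n T hT
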